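/- Consider the forced Lur'e system ẋ(t) = Ax(t) + B₁f(C₁x(t)) + B₂w(t) under (A1) and (A2) with time-independent f, and assume hypothesis (H1) holds. Suppose further that there exist a strictly positive vector v ∈ ℝ^{p₁} and ρ ∈ (0,1) such that v^⊤G₁₁(0)Δ ≤ ρv^⊤ componentwise, where G₁₁(0) := C₁(−A)^{-1}B₁. Then for every w* ∈ ℝ^{m₂} there exists a unique x* ∈ ℝ^n such that 0 = Ax* + B₁f(C₁x*) + B₂w*. -/

import Mathlib

open Matrix

noncomputable section

/-- A square real matrix is Metzler if all its off-diagonal entries are nonnegative. -/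
def IsMetzler {n : ℕ} (A : Matrix (Fin n) (Fin n) ℝ) : Prop :=
  ∀ i j, i ≠ j → 0 ≤ A i j

/-!
For a Metzler matrix `A` one has `-|A x| ≤ A |x|`; together with `p⊤ A < 0` (from (H1)) this
shows that `A x ≤ 0` forces `x ≥ 0`, so `-A` is invertible with `(-A)⁻¹ ≥ 0`, hence `G₁₁(0) ≥ 0`.

Equilibria are the fixed points of `x ↦ (-A)⁻¹ (B₁ f(C₁ x) + B₂ w*)`, and `C₁` maps them
bijectively onto the fixed points of `T z = C₁ (-A)⁻¹ (B₁ f(z) + B₂ w*)`. By (A2) and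
`G₁₁(0) ≥ 0`, `|T a - T b| ≤ G₁₁(0) Δ |a - b|`, so the small-gain condition makes `T` a
`ρ`-contraction for the weighted `ℓ¹` distance `∑ vᵢ |aᵢ - bᵢ|`, and Banach's fixed point
theorem applies.
-/

namespace Matrix

variable {ι κ μ : Type*} [Fintype κ]

lemma mul_apply_nonneg {M : Matrix ι κ ℝ} {N : Matrix κ μ ℝ} (hM : ∀ i j, 0 ≤ M i j)
    (hN : ∀ i j, 0 ≤ N i j) (i : ι) (j : μ) : 0 ≤ (M * N) i j :=
  Finset.sum_nonneg fun k _ => mul_nonneg (hM i k) (hN k j)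

lemma mulVec_le_mulVec_of_nonneg {M : Matrix ι κ ℝ} (hM : ∀ i j, 0 ≤ M i j) {x y : κ → ℝ}
    (hxy : x ≤ y) : M *ᵥ x ≤ M *ᵥ y :=
  fun i => dotProduct_le_dotProduct_of_nonneg_left hxy fun j => hM i j

lemma abs_mulVec_le_of_nonneg {M : Matrix ι κ ℝ} (hM : ∀ i j, 0 ≤ M i j) (x : κ → ℝ) :
    |M *ᵥ x| ≤ M *ᵥ |x| := fun i =>
  calc |∑ j, M i j * x j| ≤ ∑ j, |M i j * x j| := Finset.abs_sum_le_sum_abs _ _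
    _ = ∑ j, M i j * |x j| := by simp only [abs_mul, abs_of_nonneg (hM i _)]

lemma eq_zero_of_nonneg_of_mulVec_nonneg [Fintype ι] {A : Matrix ι ι ℝ} {p z : ι → ℝ} (hp : 0 ≤ p)
    (hpA : ∀ j, (p ᵥ* A) j < 0) (hz : 0 ≤ z) (hAz : 0 ≤ A *ᵥ z) : z = 0 := by
  have hterm : ∀ j ∈ Finset.univ, (p ᵥ* A) j * z j ≤ 0 :=
    fun j _ => mul_nonpos_of_nonpos_of_nonneg (hpA j).le (hz j)
  have hsum : (p ᵥ* A) ⬝ᵥ z = 0 := le_antisymm (Finset.sum_nonpos hterm)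
    (dotProduct_mulVec p A z ▸ dotProduct_nonneg_of_nonneg hp hAz)
  funext j
  exact (mul_eq_zero.1 ((Finset.sum_eq_zero_iff_of_nonpos hterm).1 hsum j
    (Finset.mem_univ j))).resolve_left (hpA j).ne

lemma eq_inv_mulVec_iff [Fintype ι] [DecidableEq ι] {N : Matrix ι ι ℝ} (hN : IsUnit N.det)
    {x b : ι → ℝ} : x = N⁻¹ *ᵥ b ↔ N *ᵥ x = b := by
  constructor <;> rintro rfl
  · rw [mulVec_mulVec, mul_nonsing_inv _ hN, one_mulVec]
  · rw [mulVec_mulVec, nonsing_inv_mul _ hN, one_mulVec]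

end Matrix

namespace IsMetzler

variable {n : ℕ} {A : Matrix (Fin n) (Fin n) ℝ}

lemma neg_abs_mulVec_le (hA : IsMetzler A) (x : Fin n → ℝ) : -|A *ᵥ x| ≤ A *ᵥ |x| := by
  intro i
  obtain ⟨s, hs, hsx⟩ : ∃ s : ℝ, |s| = 1 ∧ s * x i = |x i| := by
    rcases le_or_gt 0 (x i) with h | h
    exacts [⟨1, by simp, by simp [abs_of_nonneg h]⟩, ⟨-1, by simp, by simp [abs_of_neg h]⟩]
  have habs_mul : ∀ y, |s * y| = |y| := fun y => by rw [abs_mul, hs, one_mul]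
  calc -|(A *ᵥ x) i| = -|s * (A *ᵥ x) i| := by rw [habs_mul]
    _ ≤ s * (A *ᵥ x) i := neg_abs_le _
    _ = ∑ j, A i j * (s * x j) := by simp only [mulVec, dotProduct, Finset.mul_sum, mul_left_comm]
    _ ≤ ∑ j, A i j * |x j| := Finset.sum_le_sum fun j _ => by
      rcases eq_or_ne i j with rfl | hij
      · rw [hsx]
      · exact mul_le_mul_of_nonneg_left ((le_abs_self _).trans (habs_mul _).le) (hA i j hij)

variable {p : Fin n → ℝ}

lemma nonneg_of_mulVec_nonpos (hA : IsMetzler A) (hp : 0 ≤ p) (hpA : ∀ j, (p ᵥ* A) j < 0)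
    {x : Fin n → ℝ} (hx : A *ᵥ x ≤ 0) : 0 ≤ x := by
  have hle : A *ᵥ x ≤ A *ᵥ |x| := by simpa [abs_of_nonpos hx] using hA.neg_abs_mulVec_le x
  have hzero : |x| - x = 0 := eq_zero_of_nonneg_of_mulVec_nonneg hp hpA
    (sub_nonneg.2 (le_abs_self x)) (by rw [mulVec_sub]; exact sub_nonneg.2 hle)
  rw [← sub_eq_zero.1 hzero]
  exact abs_nonneg x

lemma isUnit_det_neg (hA : IsMetzler A) (hp : 0 ≤ p) (hpA : ∀ j, (p ᵥ* A) j < 0) :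
    IsUnit (-A).det := by
  refine isUnit_iff_ne_zero.2 fun hdet => ?_
  obtain ⟨x, hx0, hx⟩ := exists_mulVec_eq_zero_iff.2 hdet
  have hneg := hA.nonneg_of_mulVec_nonpos hp hpA (x := -x) (by rw [mulVec_neg, ← neg_mulVec, hx])
  have hpos := hA.nonneg_of_mulVec_nonpos hp hpA (x := x)
    (by rw [← neg_neg A, neg_mulVec, hx, neg_zero])
  exact hx0 (le_antisymm (neg_nonneg.1 hneg) hpos)

lemma neg_inv_nonneg (hA : IsMetzler A) (hp : 0 ≤ p) (hpA : ∀ j, (p ᵥ* A) j < 0) (i j : Fin n) :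
    0 ≤ (-A)⁻¹ i j := by
  have hcol : A *ᵥ ((-A)⁻¹ *ᵥ Pi.single j 1) ≤ 0 := by
    have hinv := (eq_inv_mulVec_iff (hA.isUnit_det_neg hp hpA) (x := (-A)⁻¹ *ᵥ Pi.single j 1)).1 rfl
    rw [neg_mulVec] at hinv
    rw [← neg_neg (A *ᵥ _), hinv, neg_nonpos]
    exact Pi.single_nonneg.2 zero_le_one
  simpa [mulVec_single_one] using hA.nonneg_of_mulVec_nonpos hp hpA hcol i

end IsMetzler

namespace Function

theorem existsUnique_isFixedPt_comp {α β : Type*} {g : β → α} {h : α → β}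
    (H : ∃! b, IsFixedPt (h ∘ g) b) : ∃! a, IsFixedPt (g ∘ h) a := by
  obtain ⟨b, hb, hb_unique⟩ := H
  refine ⟨g b, congrArg g hb, fun a ha => ?_⟩
  rw [← ha, comp_apply, hb_unique (h a) (congrArg h ha)]

end Function

theorem existsUnique_isFixedPt_of_abs_sub_le_mulVec {ι : Type*} [Fintype ι] {T : (ι → ℝ) → ι → ℝ}
    {M : Matrix ι ι ℝ} {v : ι → ℝ} {ρ : ℝ} (hv : ∀ i, 0 < v i) (hρ : ρ < 1)
    (hvM : ∀ j, (v ᵥ* M) j ≤ ρ * v j) (hT : ∀ a b, |T a - T b| ≤ M *ᵥ |a - b|) :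
    ∃! z, Function.IsFixedPt T z := by
  let e : (ι → ℝ) ≃ PiLp 1 (fun _ : ι => ℝ) :=
    { toFun := fun z => WithLp.toLp 1 (v * z)
      invFun := fun w => WithLp.ofLp w / v
      left_inv := fun z => funext fun i => mul_div_cancel_left₀ (z i) (hv i).ne'
      right_inv := fun w => by ext i; exact mul_div_cancel₀ (w i) (hv i).ne' }
  have hdist : ∀ a b, dist (e a) (e b) = v ⬝ᵥ |a - b| := fun a b => by
    simp [e, PiLp.dist_eq_of_L1, dotProduct, Real.dist_eq, ← mul_sub, abs_mul, abs_of_pos (hv _)]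
  have hcontr : ContractingWith ρ.toNNReal (e ∘ T ∘ e.symm) := by
    refine ⟨Real.toNNReal_lt_one.2 hρ, LipschitzWith.of_dist_le_mul fun x y => ?_⟩
    obtain ⟨a, rfl⟩ := e.surjective x
    obtain ⟨b, rfl⟩ := e.surjective y
    simp only [Function.comp_apply, Equiv.symm_apply_apply]
    calc dist (e (T a)) (e (T b)) = v ⬝ᵥ |T a - T b| := hdist _ _
      _ ≤ v ⬝ᵥ (M *ᵥ |a - b|) := dotProduct_le_dotProduct_of_nonneg_left (hT a b) fun i => (hv i).le
      _ = (v ᵥ* M) ⬝ᵥ |a - b| := dotProduct_mulVec _ _ _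
      _ ≤ (ρ • v) ⬝ᵥ |a - b| := dotProduct_le_dotProduct_of_nonneg_right hvM (abs_nonneg _)
      _ = ρ * dist (e a) (e b) := by rw [hdist, smul_dotProduct, smul_eq_mul]
      _ ≤ ρ.toNNReal * dist (e a) (e b) := by gcongr; exact Real.le_coe_toNNReal ρ
  rw [e.existsUnique_congr (q := Function.IsFixedPt (e ∘ T ∘ e.symm)) fun z => by
    simp [Function.IsFixedPt]]
  exact ⟨_, hcontr.fixedPoint_isFixedPt, fun z hz => hcontr.fixedPoint_unique hz⟩

theorem stmt9_general {n m₁ m₂ p₁ : ℕ}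
    (A : Matrix (Fin n) (Fin n) ℝ) (B₁ : Matrix (Fin n) (Fin m₁) ℝ)
    (B₂ : Matrix (Fin n) (Fin m₂) ℝ) (C₁ : Matrix (Fin p₁) (Fin n) ℝ)
    -- (A1)
    (hA : IsMetzler A) (hB₁ : ∀ i j, 0 ≤ B₁ i j)
    (hC₁ : ∀ i j, 0 ≤ C₁ i j)
    -- (A2), time-independent
    (f : (Fin p₁ → ℝ) → Fin m₁ → ℝ) (Δ : Matrix (Fin m₁) (Fin p₁) ℝ)
    (hΔ : ∀ i j, 0 ≤ Δ i j)
    (hf_inc : ∀ ζ₁ ζ₂ : Fin p₁ → ℝ,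
        ∀ i, |f ζ₁ i - f ζ₂ i| ≤ Δ.mulVec (fun j => |ζ₁ j - ζ₂ j|) i)
    -- (H1)
    (ξ : ℝ) (hξ : 0 < ξ) (p : Fin n → ℝ) (hp : ∀ i, 0 < p i)
    (hH1 : ∀ j, vecMul p (A + B₁ * Δ * C₁) j ≤ -(ξ * p j))
    -- weighted small-gain condition v⊤ G₁₁(0) Δ ≤ ρ v⊤ with G₁₁(0) = C₁(−A)⁻¹B₁
    (v : Fin p₁ → ℝ) (hv : ∀ i, 0 < v i) (ρ : ℝ) (hρ1 : ρ < 1)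
    (hsg : ∀ j, vecMul v ((C₁ * (-A)⁻¹ * B₁) * Δ) j ≤ ρ * v j) :
    ∀ wstar : Fin m₂ → ℝ, ∃! xstar : Fin n → ℝ,
      (0 : Fin n → ℝ) =
        A.mulVec xstar + B₁.mulVec (f (C₁.mulVec xstar)) + B₂.mulVec wstar := by
  intro wstar
  have hp0 : 0 ≤ p := fun i => (hp i).le
  have hpA : ∀ j, (p ᵥ* A) j < 0 := fun j => by
    have hfeedback : 0 ≤ (p ᵥ* (B₁ * Δ * C₁)) j := dotProduct_nonneg_of_nonneg hp0
      fun i => mul_apply_nonneg (mul_apply_nonneg hB₁ hΔ) hC₁ i j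
    have hH1j := hH1 j
    rw [vecMul_add, Pi.add_apply] at hH1j
    linarith [mul_pos hξ (hp j)]
  have hG : ∀ i j, 0 ≤ (C₁ * (-A)⁻¹ * B₁) i j :=
    mul_apply_nonneg (mul_apply_nonneg hC₁ (hA.neg_inv_nonneg hp0 hpA)) hB₁
  let g : (Fin p₁ → ℝ) → Fin n → ℝ := fun z => (-A)⁻¹ *ᵥ (B₁ *ᵥ f z + B₂ *ᵥ wstar)
  have hequilibrium : ∀ x, (0 = A *ᵥ x + B₁ *ᵥ f (C₁ *ᵥ x) + B₂ *ᵥ wstar) ↔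
      Function.IsFixedPt (g ∘ (C₁ *ᵥ ·)) x := fun x => by
    change _ ↔ (-A)⁻¹ *ᵥ _ = x
    rw [eq_comm (a := (-A)⁻¹ *ᵥ _), eq_inv_mulVec_iff (hA.isUnit_det_neg hp0 hpA), neg_mulVec]
    constructor <;> intro h <;> linear_combination h
  rw [existsUnique_congr hequilibrium]
  refine Function.existsUnique_isFixedPt_comp
    (existsUnique_isFixedPt_of_abs_sub_le_mulVec hv hρ1 hsg fun a b => ?_)
  calc |C₁ *ᵥ g a - C₁ *ᵥ g b| = |(C₁ * (-A)⁻¹ * B₁) *ᵥ (f a - f b)| := by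
        simp only [g, ← mulVec_sub, mulVec_add, add_sub_add_right_eq_sub, mulVec_mulVec,
          Matrix.mul_assoc]
    _ ≤ (C₁ * (-A)⁻¹ * B₁) *ᵥ |f a - f b| := abs_mulVec_le_of_nonneg hG _
    _ ≤ (C₁ * (-A)⁻¹ * B₁) *ᵥ (Δ *ᵥ |a - b|) := mulVec_le_mulVec_of_nonneg hG (hf_inc a b)
    _ = (C₁ * (-A)⁻¹ * B₁ * Δ) *ᵥ |a - b| := mulVec_mulVec _ _ _

/-- existence and uniqueness of the equilibrium of the forced Lur'e system
for each constant forcing term, under (A1), (A2), (H1) and the weighted small-gain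
condition `v⊤ G₁₁(0) Δ ≤ ρ v⊤`. -/
theorem stmt9 {n m₁ m₂ p₁ : ℕ}
    (A : Matrix (Fin n) (Fin n) ℝ) (B₁ : Matrix (Fin n) (Fin m₁) ℝ)
    (B₂ : Matrix (Fin n) (Fin m₂) ℝ) (C₁ : Matrix (Fin p₁) (Fin n) ℝ)
    -- (A1)
    (hA : IsMetzler A) (hB₁ : ∀ i j, 0 ≤ B₁ i j) (hB₂ : ∀ i j, 0 ≤ B₂ i j)
    (hC₁ : ∀ i j, 0 ≤ C₁ i j)
    -- (A2), time-independent
    (f : (Fin p₁ → ℝ) → Fin m₁ → ℝ) (Δ : Matrix (Fin m₁) (Fin p₁) ℝ)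
    (hΔ : ∀ i j, 0 ≤ Δ i j)
    (hf_inc : ∀ ζ₁ ζ₂ : Fin p₁ → ℝ,
        ∀ i, |f ζ₁ i - f ζ₂ i| ≤ Δ.mulVec (fun j => |ζ₁ j - ζ₂ j|) i)
    -- (H1)
    (ξ : ℝ) (hξ : 0 < ξ) (p : Fin n → ℝ) (hp : ∀ i, 0 < p i)
    (hH1 : ∀ j, vecMul p (A + B₁ * Δ * C₁) j ≤ -(ξ * p j))
    -- weighted small-gain condition v⊤ G₁₁(0) Δ ≤ ρ v⊤ with G₁₁(0) = C₁(−A)⁻¹B₁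
    (v : Fin p₁ → ℝ) (hv : ∀ i, 0 < v i) (ρ : ℝ) (hρ0 : 0 < ρ) (hρ1 : ρ < 1)
    (hsg : ∀ j, vecMul v ((C₁ * (-A)⁻¹ * B₁) * Δ) j ≤ ρ * v j) :
    ∀ wstar : Fin m₂ → ℝ, ∃! xstar : Fin n → ℝ,
      (0 : Fin n → ℝ) =
        A.mulVec xstar + B₁.mulVec (f (C₁.mulVec xstar)) + B₂.mulVec wstar :=
  stmt9_general A B₁ B₂ C₁ hA hB₁ hC₁ f Δ hΔ hf_inc ξ hξ p hp hH1 v hv ρ hρ1 hsg
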